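/- Let (a_{nε})_{n∈ℕ,ε} be a net of complex numbers such that both (a_{nε})_{n,ε} and (|a_{nε}|)_{n,ε} are ρ-moderate over hypersums, with classes (a_n)_n ∈ ℂ~_s and (|a_n|)_n ∈ ℝ~_s. If the hyperseries Σ_{n∈ℕ~} |a_n| converges in ℝ~, then the hyperseries Σ_{n∈ℕ~} a_n converges in ℂ~ and |Σ_{n∈ℕ~} a_n| ≤ Σ_{n∈ℕ~} |a_n|. -/

import Mathlib

open Filter

noncomputable section

/-- `P ε` holds for all ε small. -/
def EvS (P : ℝ → Prop) : Prop := ∃ ε₀ : ℝ, 0 < ε₀ ∧ ε₀ ≤ 1 ∧ ∀ ε : ℝ, 0 < ε → ε ≤ ε₀ → P ε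

theorem EvS.mono {P Q : ℝ → Prop} (h : EvS P) (h2 : ∀ ε, 0 < ε → ε ≤ 1 → P ε → Q ε) : EvS Q := by
  obtain ⟨e, he, he1, hP⟩ := h
  exact ⟨e, he, he1, fun ε hε hεe => h2 ε hε (hεe.trans he1) (hP ε hε hεe)⟩

theorem EvS.and {P Q : ℝ → Prop} (h : EvS P) (h' : EvS Q) : EvS fun ε => P ε ∧ Q ε := by
  obtain ⟨e, he, he1, hP⟩ := h
  obtain ⟨e', he', he1', hQ⟩ := h'
  exact ⟨min e e', lt_min he he', le_trans (min_le_left _ _) he1, fun ε hε hm =>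
    ⟨hP ε hε (le_trans hm (min_le_left _ _)), hQ ε hε (le_trans hm (min_le_right _ _))⟩⟩

/-- A gauge: a nonincreasing net of reals in (0,1] tending to 0. -/
structure Gauge where
  ρ : ℝ → ℝ
  pos : ∀ ε : ℝ, 0 < ε → ε ≤ 1 → 0 < ρ ε
  le_one : ∀ ε : ℝ, 0 < ε → ε ≤ 1 → ρ ε ≤ 1
  anti : ∀ ε ε' : ℝ, 0 < ε → ε ≤ ε' → ε' ≤ 1 → ρ ε' ≤ ρ ε
  to_zero : Tendsto ρ (nhdsWithin 0 (Set.Ioi 0)) (nhds 0)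

namespace Gauge

theorem evs_le (g : Gauge) {δ : ℝ} (hδ : 0 < δ) : EvS fun ε => g.ρ ε ≤ δ := by
  have h := g.to_zero.eventually_lt_const hδ
  rw [eventually_nhdsWithin_iff, Metric.eventually_nhds_iff] at h
  obtain ⟨e, he, hP⟩ := h
  refine ⟨min (e / 2) 1, by positivity, min_le_right _ _, fun ε hε hεe => ?_⟩
  have hd : dist ε 0 < e := by
    rw [Real.dist_eq, sub_zero, abs_of_pos hε]
    have h1 : ε ≤ e / 2 := le_trans hεe (min_le_left _ _)
    linarith
  exact (hP hd (Set.mem_Ioi.mpr hε)).le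

variable {𝕜 : Type} [RCLike 𝕜]

/-- ρ-moderate nets. -/
def Mod (g : Gauge) (x : ℝ → 𝕜) : Prop := ∃ N : ℕ, EvS fun ε => ‖x ε‖ ≤ g.ρ ε ^ (-(N : ℤ))

/-- ρ-negligible nets. -/
def Negl (g : Gauge) (x : ℝ → 𝕜) : Prop := ∀ q : ℕ, EvS fun ε => ‖x ε‖ ≤ g.ρ ε ^ q

theorem Negl.mod {g : Gauge} {x : ℝ → 𝕜} (h : g.Negl x) : g.Mod x := by
  refine ⟨0, (h 0).mono fun ε hε hε1 hx => ?_⟩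
  simpa using hx

theorem negl_sub_self (g : Gauge) (x : ℝ → 𝕜) : g.Negl fun ε => x ε - x ε := fun q =>
  ⟨1, one_pos, le_refl 1, fun ε hε hε1 => by
    simp only [sub_self, norm_zero]
    exact pow_nonneg (g.pos ε hε hε1).le q⟩

theorem negl_of_evs_eq (g : Gauge) {x y : ℝ → 𝕜} (h : EvS fun ε => x ε = y ε) :
    g.Negl fun ε => x ε - y ε := fun q => h.mono fun ε hε hε1 he => by
  show ‖x ε - y ε‖ ≤ _
  rw [he, sub_self, norm_zero]; exact pow_nonneg (g.pos ε hε hε1).le q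

theorem Negl.symm_sub {g : Gauge} {x y : ℝ → 𝕜} (h : g.Negl fun ε => x ε - y ε) :
    g.Negl fun ε => y ε - x ε := fun q => (h q).mono fun ε _ _ hx => by rwa [norm_sub_rev]

theorem Negl.add {g : Gauge} {x y : ℝ → 𝕜} (hx : g.Negl x) (hy : g.Negl y) :
    g.Negl fun ε => x ε + y ε := by
  intro q
  refine (((hx (q+1)).and (hy (q+1))).and (g.evs_le (by norm_num : (0:ℝ) < 1/2))).mono
    fun ε hε hε1 h => ?_
  obtain ⟨⟨h1, h2⟩, h3⟩ := h
  have hρ := g.pos ε hε hε1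
  calc ‖x ε + y ε‖ ≤ ‖x ε‖ + ‖y ε‖ := norm_add_le _ _
    _ ≤ g.ρ ε ^ (q+1) + g.ρ ε ^ (q+1) := add_le_add h1 h2
    _ = 2 * g.ρ ε * g.ρ ε ^ q := by ring
    _ ≤ 1 * g.ρ ε ^ q := by
        apply mul_le_mul_of_nonneg_right _ (pow_nonneg hρ.le q)
        linarith
    _ = g.ρ ε ^ q := one_mul _

theorem Negl.neg {g : Gauge} {y : ℝ → 𝕜} (hy : g.Negl y) : g.Negl fun ε => -(y ε) :=
  fun q => (hy q).mono fun ε _ _ h => by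
    show ‖-(y ε)‖ ≤ _
    rwa [norm_neg]

theorem Negl.sub {g : Gauge} {x y : ℝ → 𝕜} (hx : g.Negl x) (hy : g.Negl y) :
    g.Negl fun ε => x ε - y ε := by
  have h := hx.add hy.neg
  have heq : (fun ε => x ε + -(y ε)) = fun ε => x ε - y ε := by funext ε; ring
  rwa [heq] at h

theorem Negl.triangle {g : Gauge} {x y z : ℝ → 𝕜} (h1 : g.Negl fun ε => x ε - y ε)
    (h2 : g.Negl fun ε => y ε - z ε) : g.Negl fun ε => x ε - z ε := by
  have h := h1.add h2
  have heq : (fun ε => (x ε - y ε) + (y ε - z ε)) = fun ε => x ε - z ε := by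
    funext ε; ring
  rwa [heq] at h

end Gauge

namespace Gauge

variable {𝕜 : Type} [RCLike 𝕜]

theorem zpow_neg_le (g : Gauge) {ε : ℝ} (hε : 0 < ε) (hε1 : ε ≤ 1) {a b : ℕ} (h : a ≤ b) :
    g.ρ ε ^ (-(a:ℤ)) ≤ g.ρ ε ^ (-(b:ℤ)) := by
  apply zpow_le_zpow_right_of_le_one₀ (g.pos ε hε hε1) (g.le_one ε hε hε1)
  omega

theorem Mod.of_norm_le {g : Gauge} {x : ℝ → 𝕜} {y : ℝ → ℝ} (hy : g.Mod y)
    (h : ∀ ε, 0 < ε → ε ≤ 1 → ‖x ε‖ ≤ |y ε|) : g.Mod x := by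
  obtain ⟨N, hN⟩ := hy
  exact ⟨N, hN.mono fun ε hε hε1 hb => le_trans (h ε hε hε1) (by rwa [Real.norm_eq_abs] at hb)⟩

theorem Mod.add {g : Gauge} {x y : ℝ → 𝕜} (hx : g.Mod x) (hy : g.Mod y) :
    g.Mod fun ε => x ε + y ε := by
  obtain ⟨N, hN⟩ := hx; obtain ⟨M, hM⟩ := hy
  refine ⟨N + M + 1, ((hN.and hM).and (g.evs_le (by norm_num : (0:ℝ) < 1/2))).mono
    fun ε hε hε1 h => ?_⟩
  obtain ⟨⟨h1, h2⟩, h3⟩ := h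
  have hρ := g.pos ε hε hε1
  have e1 : g.ρ ε ^ (-(N:ℤ)) ≤ g.ρ ε ^ (-((N+M:ℕ):ℤ)) := g.zpow_neg_le hε hε1 (by omega)
  have e2 : g.ρ ε ^ (-(M:ℤ)) ≤ g.ρ ε ^ (-((N+M:ℕ):ℤ)) := g.zpow_neg_le hε hε1 (by omega)
  have key : g.ρ ε ^ (-((N+M:ℕ):ℤ)) = g.ρ ε ^ (-((N+M+1:ℕ):ℤ)) * g.ρ ε := by
    rw [← zpow_add_one₀ hρ.ne']
    congr 1
    push_cast
    ring
  have hpos : (0:ℝ) < g.ρ ε ^ (-((N+M+1:ℕ):ℤ)) := zpow_pos hρ _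
  calc ‖x ε + y ε‖ ≤ ‖x ε‖ + ‖y ε‖ := norm_add_le _ _
    _ ≤ g.ρ ε ^ (-((N+M:ℕ):ℤ)) + g.ρ ε ^ (-((N+M:ℕ):ℤ)) := add_le_add (h1.trans e1) (h2.trans e2)
    _ = 2 * g.ρ ε * g.ρ ε ^ (-((N+M+1:ℕ):ℤ)) := by rw [key]; ring
    _ ≤ 1 * g.ρ ε ^ (-((N+M+1:ℕ):ℤ)) := by
        apply mul_le_mul_of_nonneg_right _ hpos.le
        linarith
    _ = g.ρ ε ^ (-((N+M+1:ℕ):ℤ)) := one_mul _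

theorem Mod.neg {g : Gauge} {x : ℝ → 𝕜} (hx : g.Mod x) : g.Mod fun ε => -(x ε) := by
  obtain ⟨N, hN⟩ := hx
  exact ⟨N, hN.mono fun ε _ _ h => by rwa [norm_neg]⟩

theorem Mod.sub {g : Gauge} {x y : ℝ → 𝕜} (hx : g.Mod x) (hy : g.Mod y) :
    g.Mod fun ε => x ε - y ε := by
  have h := hx.add hy.neg
  have heq : (fun ε => x ε + -(y ε)) = fun ε => x ε - y ε := by funext ε; ring
  rwa [heq] at h

theorem Mod.mul {g : Gauge} {x y : ℝ → 𝕜} (hx : g.Mod x) (hy : g.Mod y) :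
    g.Mod fun ε => x ε * y ε := by
  obtain ⟨N, hN⟩ := hx; obtain ⟨M, hM⟩ := hy
  refine ⟨N + M, (hN.and hM).mono fun ε hε hε1 h => ?_⟩
  obtain ⟨h1, h2⟩ := h
  have hρ := g.pos ε hε hε1
  calc ‖x ε * y ε‖ = ‖x ε‖ * ‖y ε‖ := norm_mul _ _
    _ ≤ g.ρ ε ^ (-(N:ℤ)) * g.ρ ε ^ (-(M:ℤ)) :=
        mul_le_mul h1 h2 (norm_nonneg _) (zpow_nonneg hρ.le _)
    _ = g.ρ ε ^ (-((N+M:ℕ):ℤ)) := by rw [← zpow_add₀ hρ.ne']; congr 1; push_cast; ring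

theorem Mod.norm {g : Gauge} {x : ℝ → 𝕜} (hx : g.Mod x) : g.Mod fun ε => ‖x ε‖ := by
  obtain ⟨N, hN⟩ := hx
  exact ⟨N, hN.mono fun ε _ _ h => by rwa [norm_norm]⟩

theorem Negl.mul_mod {g : Gauge} {x y : ℝ → 𝕜} (hx : g.Negl x) (hy : g.Mod y) :
    g.Negl fun ε => x ε * y ε := by
  obtain ⟨M, hM⟩ := hy
  intro q
  refine ((hx (q + M)).and hM).mono fun ε hε hε1 h => ?_
  obtain ⟨h1, h2⟩ := h
  have hρ := g.pos ε hε hε1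
  calc ‖x ε * y ε‖ = ‖x ε‖ * ‖y ε‖ := norm_mul _ _
    _ ≤ g.ρ ε ^ (q+M) * g.ρ ε ^ (-(M:ℤ)) :=
        mul_le_mul h1 h2 (norm_nonneg _) (pow_nonneg hρ.le _)
    _ = g.ρ ε ^ q := by
        rw [← zpow_natCast (g.ρ ε) (q+M), ← zpow_add₀ hρ.ne', ← zpow_natCast (g.ρ ε) q]
        congr 1; push_cast; ring

theorem mod_const (g : Gauge) (c : 𝕜) (hc : ‖c‖ ≤ 1) : g.Mod fun _ => c := by
  refine ⟨0, 1, one_pos, le_refl 1, fun ε hε hε1 => ?_⟩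
  simpa using hc

theorem mod_pow (g : Gauge) (q : ℕ) : g.Mod fun ε => g.ρ ε ^ q := by
  refine ⟨0, 1, one_pos, le_refl 1, fun ε hε hε1 => ?_⟩
  have hρ := g.pos ε hε hε1
  show ‖g.ρ ε ^ q‖ ≤ _
  rw [Real.norm_eq_abs, abs_of_nonneg (pow_nonneg hρ.le q)]
  simpa using pow_le_one₀ hρ.le (g.le_one ε hε hε1)

theorem mod_zpow_neg (g : Gauge) (q : ℕ) : g.Mod fun ε => g.ρ ε ^ (-(q:ℤ)) := by
  refine ⟨q, 1, one_pos, le_refl 1, fun ε hε hε1 => ?_⟩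
  have hρ := g.pos ε hε hε1
  show ‖g.ρ ε ^ (-(q:ℤ))‖ ≤ _
  rw [Real.norm_eq_abs, abs_of_nonneg (zpow_nonneg hρ.le _)]

/-- Hypernatural moderateness. -/
def NMod (g : Gauge) (n : ℝ → ℕ) : Prop := g.Mod fun ε => (n ε : ℝ)

end Gauge

instance gSetoid (g : Gauge) (𝕜 : Type) [RCLike 𝕜] : Setoid {x : ℝ → 𝕜 // g.Mod x} where
  r a b := g.Negl fun ε => a.1 ε - b.1 ε
  iseqv := ⟨fun a => g.negl_sub_self a.1, fun h => h.symm_sub, fun h h' => h.triangle h'⟩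

instance natSetoid (g : Gauge) : Setoid {n : ℝ → ℕ // g.NMod n} where
  r a b := g.Negl fun ε => (a.1 ε : ℝ) - (b.1 ε : ℝ)
  iseqv := ⟨fun a => g.negl_sub_self _, fun h => h.symm_sub, fun h h' => h.triangle h'⟩

/-- The ring of Robinson-Colombeau generalized numbers (ℂ~ for 𝕜 = ℂ, ℝ~ for 𝕜 = ℝ). -/
abbrev GQ (g : Gauge) (𝕜 : Type) [RCLike 𝕜] := Quotient (gSetoid g 𝕜)

abbrev Ct (g : Gauge) := GQ g ℂ
abbrev Rt (g : Gauge) := GQ g ℝ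

/-- The set of hypernatural numbers ℕ~. -/
abbrev Nt (g : Gauge) := Quotient (natSetoid g)

def GQ.mk (g : Gauge) {𝕜 : Type} [RCLike 𝕜] (x : ℝ → 𝕜) (h : g.Mod x) : GQ g 𝕜 :=
  Quotient.mk (gSetoid g 𝕜) ⟨x, h⟩

/-- `x` is a representative of the generalized number `z`. -/
def IsRep (g : Gauge) {𝕜 : Type} [RCLike 𝕜] (x : ℝ → 𝕜) (z : GQ g 𝕜) : Prop :=
  ∃ h : g.Mod x, GQ.mk g x h = z

def Nt.mk (g : Gauge) (n : ℝ → ℕ) (h : g.NMod n) : Nt g := Quotient.mk (natSetoid g) ⟨n, h⟩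

def Nt.IsRep (g : Gauge) (n : ℝ → ℕ) (m : Nt g) : Prop := ∃ h : g.NMod n, Nt.mk g n h = m

/-- dρ^q as an element of ℝ~. -/
def Gauge.dpow (g : Gauge) (q : ℕ) : Rt g := GQ.mk g (fun ε => g.ρ ε ^ q) (g.mod_pow q)

/-- dρ^(−q) as an element of ℝ~. -/
def Gauge.dpowNeg (g : Gauge) (q : ℕ) : Rt g := GQ.mk g (fun ε => g.ρ ε ^ (-(q:ℤ))) (g.mod_zpow_neg q)

def GQ.zero (g : Gauge) (𝕜 : Type) [RCLike 𝕜] : GQ g 𝕜 :=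
  GQ.mk g (fun _ => 0) (g.mod_const 0 (by simp))

def GQ.one (g : Gauge) (𝕜 : Type) [RCLike 𝕜] : GQ g 𝕜 :=
  GQ.mk g (fun _ => 1) (g.mod_const 1 (by simp))

variable {𝕜 : Type} [RCLike 𝕜]

/-- Order relation on ℝ~ (via some representatives). -/
def Rt.le (g : Gauge) (x y : Rt g) : Prop :=
  ∃ a b : {u : ℝ → ℝ // g.Mod u}, Quotient.mk (gSetoid g ℝ) a = x ∧
    Quotient.mk (gSetoid g ℝ) b = y ∧ EvS fun ε => a.1 ε ≤ b.1 ε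

/-- Strict order relation on ℝ~: `x < y` iff `y − x ≥ dρ^m` for some m. -/
def Rt.lt (g : Gauge) (x y : Rt g) : Prop :=
  ∃ a b : {u : ℝ → ℝ // g.Mod u}, Quotient.mk (gSetoid g ℝ) a = x ∧
    Quotient.mk (gSetoid g ℝ) b = y ∧ ∃ m : ℕ, EvS fun ε => g.ρ ε ^ m ≤ b.1 ε - a.1 ε

/-- Order on ℕ~. -/
def Nt.le (g : Gauge) (m n : Nt g) : Prop :=
  ∃ a b : {k : ℝ → ℕ // g.NMod k}, Quotient.mk (natSetoid g) a = m ∧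
    Quotient.mk (natSetoid g) b = n ∧ EvS fun ε => a.1 ε ≤ b.1 ε

/-- The relation `|z − w| < r` between generalized numbers, r ∈ ℝ~. -/
def GQ.absLt (g : Gauge) (z w : GQ g 𝕜) (r : Rt g) : Prop :=
  ∃ a b : {x : ℝ → 𝕜 // g.Mod x}, ∃ u : {x : ℝ → ℝ // g.Mod x},
    Quotient.mk (gSetoid g 𝕜) a = z ∧ Quotient.mk (gSetoid g 𝕜) b = w ∧
    Quotient.mk (gSetoid g ℝ) u = r ∧
    ∃ m : ℕ, EvS fun ε => ‖a.1 ε - b.1 ε‖ + g.ρ ε ^ m ≤ u.1 ε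

/-- The relation `|z − w| ≤ r`. -/
def GQ.absLe (g : Gauge) (z w : GQ g 𝕜) (r : Rt g) : Prop :=
  ∃ a b : {x : ℝ → 𝕜 // g.Mod x}, ∃ u : {x : ℝ → ℝ // g.Mod x},
    Quotient.mk (gSetoid g 𝕜) a = z ∧ Quotient.mk (gSetoid g 𝕜) b = w ∧
    Quotient.mk (gSetoid g ℝ) u = r ∧ EvS fun ε => ‖a.1 ε - b.1 ε‖ ≤ u.1 ε

/-- `x ∈ ℂ~` is invertible. -/
def GQ.Invertible (g : Gauge) (x : GQ g 𝕜) : Prop :=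
  ∃ a : {u : ℝ → 𝕜 // g.Mod u}, Quotient.mk (gSetoid g 𝕜) a = x ∧
    ∃ m : ℕ, EvS fun ε => g.ρ ε ^ m ≤ ‖a.1 ε‖

/-- l is the hyperlimit of the hypersequence a. -/
def HyperLim (g : Gauge) (a : Nt g → GQ g 𝕜) (l : GQ g 𝕜) : Prop :=
  ∀ q : ℕ, ∃ M : Nt g, ∀ n : Nt g, Nt.le g M n → GQ.absLt g (a n) l (g.dpow q)

/-- ρ-moderate over hypersums. -/
def Gauge.SMod (g : Gauge) (A : ℕ → ℝ → 𝕜) : Prop :=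
  ∀ N : ℝ → ℕ, g.NMod N → g.Mod fun ε => ∑ n ∈ Finset.range (N ε + 1), A n ε

/-- Hyperseries equivalence of coefficient nets. -/
def Gauge.SEquiv (g : Gauge) (A B : ℕ → ℝ → 𝕜) : Prop :=
  ∀ N M : ℝ → ℕ, g.NMod N → g.NMod M →
    g.Negl fun ε => ∑ n ∈ Finset.Icc (N ε) (M ε), (A n ε - B n ε)

theorem nat_eq_of_abs_sub_lt_one {a b : ℕ} (h : |(a:ℝ) - b| < 1) : a = b := by
  rcases lt_trichotomy a b with hlt | he | hgt
  · exfalso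
    have h1 : (a:ℝ) + 1 ≤ b := by exact_mod_cast Nat.succ_le_of_lt hlt
    have h2 := abs_lt.mp h
    linarith [h2.1]
  · exact he
  · exfalso
    have h1 : (b:ℝ) + 1 ≤ a := by exact_mod_cast Nat.succ_le_of_lt hgt
    have h2 := abs_lt.mp h
    linarith [h2.2]

theorem natEqEv (g : Gauge) {N M : ℝ → ℕ} (h : g.Negl fun ε => (N ε : ℝ) - M ε) :
    EvS fun ε => N ε = M ε := by
  refine ((h 1).and (g.evs_le (by norm_num : (0:ℝ) < 1/2))).mono fun ε hε hε1 hh => ?_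
  obtain ⟨h1, h2⟩ := hh
  apply nat_eq_of_abs_sub_lt_one
  have : ‖(N ε : ℝ) - M ε‖ = |(N ε : ℝ) - M ε| := Real.norm_eq_abs _
  rw [this] at h1
  calc |(N ε:ℝ) - M ε| ≤ g.ρ ε ^ 1 := h1
    _ = g.ρ ε := pow_one _
    _ ≤ 1/2 := h2
    _ < 1 := by norm_num

/-- Lift a representative-level construction indexed by hypernaturals to ℕ~. -/
def Nt.lift (g : Gauge) (F : (ℝ → ℕ) → ℝ → 𝕜)
    (hmod : ∀ N, g.NMod N → g.Mod (F N))
    (hcong : ∀ N M : ℝ → ℕ, EvS (fun ε => N ε = M ε) → EvS fun ε => F N ε = F M ε) :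
    Nt g → GQ g 𝕜 :=
  Quotient.lift (fun N => GQ.mk g (F N.1) (hmod N.1 N.2)) (by
    intro a b hab
    apply Quotient.sound
    exact g.negl_of_evs_eq (hcong a.1 b.1 (natEqEv g hab)))

def Nt.lift₂ (g : Gauge) (F : (ℝ → ℕ) → (ℝ → ℕ) → ℝ → 𝕜)
    (hmod : ∀ N M, g.NMod N → g.NMod M → g.Mod (F N M))
    (hcong : ∀ N N' M M' : ℝ → ℕ, EvS (fun ε => N ε = N' ε) → EvS (fun ε => M ε = M' ε) →
      EvS fun ε => F N M ε = F N' M' ε) :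
    Nt g → Nt g → GQ g 𝕜 :=
  Quotient.lift₂ (fun N M => GQ.mk g (F N.1 M.1) (hmod N.1 M.1 N.2 M.2)) (by
    intro a b a' b' ha hb
    apply Quotient.sound
    exact g.negl_of_evs_eq (hcong a.1 a'.1 b.1 b'.1 (natEqEv g ha) (natEqEv g hb)))

/-- The hypersequence of partial hypersums N ↦ Σ_{n=0}^{N} a_n. -/
def partialSum (g : Gauge) (A : ℕ → ℝ → 𝕜) (hA : g.SMod A) : Nt g → GQ g 𝕜 :=
  Nt.lift g (fun N ε => ∑ n ∈ Finset.range (N ε + 1), A n ε) (fun N hN => hA N hN)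
    (fun N M h => h.mono fun ε _ _ he => by rw [he])

/-- The hyperseries Σ_{n∈ℕ~} a_n converges to s. -/
def HSConv (g : Gauge) (A : ℕ → ℝ → 𝕜) (hA : g.SMod A) (s : GQ g 𝕜) : Prop :=
  HyperLim g (partialSum g A hA) s

theorem Gauge.NMod.mono {g : Gauge} {a b : ℝ → ℕ} (hb : g.NMod b) (h : ∀ ε, a ε ≤ b ε) :
    g.NMod a := by
  refine Gauge.Mod.of_norm_le hb fun ε _ _ => ?_
  rw [Real.norm_eq_abs, abs_of_nonneg (Nat.cast_nonneg _), abs_of_nonneg (Nat.cast_nonneg _)]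
  exact_mod_cast h ε

theorem Gauge.SMod.range {g : Gauge} {A : ℕ → ℝ → 𝕜} (hA : g.SMod A) {N : ℝ → ℕ}
    (hN : g.NMod N) : g.Mod fun ε => ∑ n ∈ Finset.range (N ε), A n ε := by
  have hN' : g.NMod fun ε => N ε - 1 := hN.mono fun ε => Nat.sub_le _ _
  obtain ⟨K, hK⟩ := hA _ hN'
  refine ⟨K, hK.mono fun ε hε hε1 h => ?_⟩
  rcases Nat.eq_zero_or_pos (N ε) with h0 | h0
  · show ‖∑ n ∈ Finset.range (N ε), A n ε‖ ≤ _
    rw [h0]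
    simp only [Finset.range_zero, Finset.sum_empty, norm_zero]
    exact le_trans (norm_nonneg _) h
  · have he : N ε - 1 + 1 = N ε := Nat.succ_pred_eq_of_pos h0
    show ‖∑ n ∈ Finset.range (N ε), A n ε‖ ≤ _
    rw [← he]
    exact h

theorem Gauge.SMod.termMod {g : Gauge} {A : ℕ → ℝ → 𝕜} (hA : g.SMod A) {N : ℝ → ℕ}
    (hN : g.NMod N) : g.Mod fun ε => A (N ε) ε := by
  have h := (hA N hN).sub (hA.range hN)
  have heq : (fun ε => (∑ n ∈ Finset.range (N ε + 1), A n ε) -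
      ∑ n ∈ Finset.range (N ε), A n ε) = fun ε => A (N ε) ε := by
    funext ε
    rw [Finset.sum_range_succ]
    ring
  rwa [heq] at h

/-- The extension of the terms of a hyperseries to ℕ~ : n ↦ a_n. -/
def GQ.term (g : Gauge) (A : ℕ → ℝ → 𝕜) (hA : g.SMod A) : Nt g → GQ g 𝕜 :=
  Nt.lift g (fun N ε => A (N ε) ε) (fun _ hN => hA.termMod hN)
    (fun N M h => h.mono fun ε _ _ he => by rw [he])

theorem norm_sum_Icc_le (A : ℕ → 𝕜) (N M : ℕ) :
    ‖∑ n ∈ Finset.Icc N M, A n‖ ≤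
      ‖∑ n ∈ Finset.range (M+1), A n‖ + ‖∑ n ∈ Finset.range N, A n‖ := by
  rcases le_or_gt N (M+1) with h | h
  · have key : (∑ n ∈ Finset.range N, A n) + (∑ n ∈ Finset.Icc N M, A n)
        = ∑ n ∈ Finset.range (M+1), A n := by
      rw [Finset.range_eq_Ico, Finset.range_eq_Ico, ← Finset.Ico_add_one_right_eq_Icc N M]
      exact Finset.sum_Ico_consecutive A (Nat.zero_le N) h
    have heq : ∑ n ∈ Finset.Icc N M, A n
        = (∑ n ∈ Finset.range (M+1), A n) - ∑ n ∈ Finset.range N, A n := by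
      rw [← key]; ring
    rw [heq]
    exact norm_sub_le _ _
  · rw [Finset.Icc_eq_empty (by omega)]
    simp only [Finset.sum_empty, norm_zero]
    positivity

theorem Gauge.SMod.IccMod {g : Gauge} {A : ℕ → ℝ → 𝕜} (hA : g.SMod A) {N M : ℝ → ℕ}
    (hN : g.NMod N) (hM : g.NMod M) :
    g.Mod fun ε => ∑ n ∈ Finset.Icc (N ε) (M ε), A n ε := by
  have h1 := (hA M hM).norm
  have h2 := (hA.range hN).norm
  refine Gauge.Mod.of_norm_le (h1.add h2) fun ε _ _ => ?_
  have hnn : (0:ℝ) ≤ ‖∑ n ∈ Finset.range (M ε + 1), A n ε‖ + ‖∑ n ∈ Finset.range (N ε), A n ε‖ :=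
    add_nonneg (norm_nonneg _) (norm_nonneg _)
  rw [abs_of_nonneg hnn]
  exact norm_sum_Icc_le _ _ _

/-- The hypersum Σ_{n=N}^{M} a_n as a function of N, M ∈ ℕ~. -/
def hypersum (g : Gauge) (A : ℕ → ℝ → 𝕜) (hA : g.SMod A) : Nt g → Nt g → GQ g 𝕜 :=
  Nt.lift₂ g (fun N M ε => ∑ n ∈ Finset.Icc (N ε) (M ε), A n ε)
    (fun _ _ hN hM => hA.IccMod hN hM)
    (fun N N' M M' h h' => (h.and h').mono fun ε _ _ he => by
      rw [he.1, he.2])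

theorem Gauge.NMod.add {g : Gauge} {a b : ℝ → ℕ} (ha : g.NMod a) (hb : g.NMod b) :
    g.NMod fun ε => a ε + b ε := by
  have h := Gauge.Mod.add (𝕜 := ℝ) ha hb
  show g.Mod fun ε => ((a ε + b ε : ℕ) : ℝ)
  have heq : (fun ε => ((a ε + b ε : ℕ) : ℝ)) = fun ε => ((a ε : ℝ) + (b ε : ℝ)) := by
    funext ε; push_cast; ring
  rwa [heq]

/-- Addition on ℕ~. -/
def Nt.add (g : Gauge) : Nt g → Nt g → Nt g :=
  Quotient.lift₂ (fun a b => Nt.mk g (fun ε => a.1 ε + b.1 ε) (a.2.add b.2)) (by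
    intro a b a' b' ha hb
    apply Quotient.sound
    have h := ((natEqEv g ha).and (natEqEv g hb))
    exact g.negl_of_evs_eq (h.mono fun ε _ _ he => by
      show ((a.1 ε + b.1 ε : ℕ) : ℝ) = ((a'.1 ε + b'.1 ε : ℕ) : ℝ)
      rw [he.1, he.2]))

/-- Subtraction on generalized numbers. -/
def GQ.sub (g : Gauge) : GQ g 𝕜 → GQ g 𝕜 → GQ g 𝕜 :=
  Quotient.lift₂ (fun a b => GQ.mk g (fun ε => a.1 ε - b.1 ε) (a.2.sub b.2)) (by
    intro a b a' b' ha hb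
    apply Quotient.sound
    show g.Negl _
    have h := Gauge.Negl.sub ha hb
    have heq : (fun ε => (a.1 ε - a'.1 ε) - (b.1 ε - b'.1 ε))
        = fun ε => (a.1 ε - b.1 ε) - (a'.1 ε - b'.1 ε) := by funext ε; ring
    rwa [heq] at h)

/-- Multiplication on generalized numbers. -/
def GQ.mul (g : Gauge) : GQ g 𝕜 → GQ g 𝕜 → GQ g 𝕜 :=
  Quotient.lift₂ (fun a b => GQ.mk g (fun ε => a.1 ε * b.1 ε) (a.2.mul b.2)) (by
    intro a b a' b' ha hb
    apply Quotient.sound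
    show g.Negl _
    have h1 : g.Negl fun ε => (a.1 ε - a'.1 ε) * b.1 ε := Gauge.Negl.mul_mod ha b.2
    have h2 : g.Negl fun ε => (b.1 ε - b'.1 ε) * a'.1 ε := Gauge.Negl.mul_mod hb a'.2
    have h := h1.add h2
    have heq : (fun ε => (a.1 ε - a'.1 ε) * b.1 ε + (b.1 ε - b'.1 ε) * a'.1 ε)
        = fun ε => a.1 ε * b.1 ε - a'.1 ε * b'.1 ε := by funext ε; ring
    rwa [heq] at h)

/-- The absolute value |·| : ℂ~ → ℝ~. -/
def GQ.abs (g : Gauge) : GQ g 𝕜 → Rt g :=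
  Quotient.lift (fun a => GQ.mk g (fun ε => ‖a.1 ε‖) a.2.norm) (by
    intro a b hab
    apply Quotient.sound
    show g.Negl _
    intro q
    refine (hab q).mono fun ε _ _ h => ?_
    show ‖‖a.1 ε‖ - ‖b.1 ε‖‖ ≤ _
    rw [Real.norm_eq_abs]
    exact le_trans (abs_norm_sub_norm_le _ _) h)

/-- Weakly ρ-moderate coefficient nets. -/
def Gauge.WMod (g : Gauge) (a : ℕ → ℝ → ℂ) : Prop :=
  ∃ Q R : ℕ, EvS fun ε => ∀ n : ℕ, ‖a n ε‖ ≤ g.ρ ε ^ (-((n * Q + R : ℕ) : ℤ))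

/-- Strong ρ-equivalence of coefficient nets. -/
def Gauge.StrEquiv (g : Gauge) (a b : ℕ → ℝ → ℂ) : Prop :=
  ∀ q r : ℕ, EvS fun ε => ∀ n : ℕ, ‖a n ε - b n ε‖ ≤ g.ρ ε ^ (n * q + r)

/-- The net of radii of convergence r_ε = (limsup_n |a_{nε}|^{1/n})⁻¹ ∈ [0,∞]. -/
def radNet (a : ℕ → ℝ → ℂ) (ε : ℝ) : ENNReal :=
  (Filter.limsup (fun n : ℕ => ENNReal.ofReal (‖a n ε‖ ^ ((n : ℝ)⁻¹))) Filter.atTop)⁻¹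

/-- Condition (i): |z − c| < rad (a_n)_c, as classes (via representatives). -/
def RadLt (g : Gauge) (a : ℕ → ℝ → ℂ) (z c : Ct g) : Prop :=
  ∃ zr cr : ℝ → ℂ, ∃ a' : ℕ → ℝ → ℂ, IsRep g zr z ∧ IsRep g cr c ∧
    g.WMod a' ∧ g.StrEquiv a a' ∧
    ∃ m : ℕ, EvS fun ε => ENNReal.ofReal (‖zr ε - cr ε‖ + g.ρ ε ^ m) ≤ radNet a' ε

/-- The coefficient net of the hyper-power series Σ a_n (z−c)^n. -/
def PSeriesNet (a : ℕ → ℝ → ℂ) (zr cr : ℝ → ℂ) : ℕ → ℝ → ℂ :=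
  fun n ε => a n ε * (zr ε - cr ε) ^ n

/-- Conditions (ii)-(iv) of the definition of the set of convergence, for given
representatives. -/
def ConvConds (g : Gauge) (a : ℕ → ℝ → ℂ) (zr cr : ℝ → ℂ) (z : Ct g) : Prop :=
  ∃ hS : g.SMod (PSeriesNet a zr cr),
    (EvS fun ε => Summable fun n : ℕ => PSeriesNet a zr cr n ε) ∧
    (∃ hm : g.Mod fun ε => ∑' n : ℕ, PSeriesNet a zr cr n ε,
      HyperLim g (partialSum g _ hS) (GQ.mk g _ hm)) ∧
    (∀ zr' : ℝ → ℂ, IsRep g zr' z →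
      (EvS fun ε => Summable fun n : ℕ => (n : ℂ) * a n ε * (zr' ε - cr ε) ^ (n - 1)) ∧
      g.Mod fun ε => ∑' n : ℕ, (n : ℂ) * a n ε * (zr' ε - cr ε) ^ (n - 1))

/-- The set of convergence σ((a_n)_c, c) of a hyper-power series. -/
def convSet (g : Gauge) (a : ℕ → ℝ → ℂ) (c : Ct g) : Set (Ct g) :=
  { z | RadLt g a z c ∧
      ∃ zr cr : ℝ → ℂ, ∃ a' : ℕ → ℝ → ℂ, IsRep g zr z ∧ IsRep g cr c ∧
        g.WMod a' ∧ g.StrEquiv a a' ∧ ConvConds g a' zr cr z }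

/-- Sharply open subsets of ℂ~. -/
def SharplyOpen (g : Gauge) (U : Set (Ct g)) : Prop :=
  ∀ z ∈ U, ∃ r : Rt g, Rt.lt g (GQ.zero g ℝ) r ∧ ∀ w : Ct g, GQ.absLt g w z r → w ∈ U

/-- `P ε` for all small ε in L. -/
def EvSOn (L : Set ℝ) (P : ℝ → Prop) : Prop :=
  ∃ ε₀ : ℝ, 0 < ε₀ ∧ ε₀ ≤ 1 ∧ ∀ ε ∈ L, 0 < ε → ε ≤ ε₀ → P ε

/-- x ∈ ℂ~ is invertible on the subpoint L. -/
def GQ.InvertibleOn (g : Gauge) {𝕜 : Type} [RCLike 𝕜] (L : Set ℝ) (x : GQ g 𝕜) : Prop :=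
  ∃ a : {u : ℝ → 𝕜 // g.Mod u}, Quotient.mk (gSetoid g 𝕜) a = x ∧
    ∃ m : ℕ, EvSOn L fun ε => g.ρ ε ^ m ≤ ‖a.1 ε‖

theorem Gauge.nmod_const (g : Gauge) (c : ℕ) : g.NMod fun _ => c := by
  refine ⟨c + 1, (g.evs_le (by positivity : (0:ℝ) < 1/(c+1))).mono fun ε hε hε1 h3 => ?_⟩
  have hρ := g.pos ε hε hε1
  show ‖((c:ℕ) : ℝ)‖ ≤ _
  rw [Real.norm_eq_abs, abs_of_nonneg (Nat.cast_nonneg _)]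
  have hc1 : (0:ℝ) < (c:ℝ) + 1 := by positivity
  calc (c:ℝ) ≤ 1 / g.ρ ε := by
        rw [le_div_iff₀ hρ]
        calc (c:ℝ) * g.ρ ε ≤ (c:ℝ) * (1/(c+1)) :=
              mul_le_mul_of_nonneg_left h3 (Nat.cast_nonneg c)
          _ ≤ 1 := by rw [mul_one_div, div_le_one hc1]; linarith
    _ = g.ρ ε ^ (-((1:ℕ):ℤ)) := by
        rw [show (-((1:ℕ):ℤ)) = (-1:ℤ) by norm_num, zpow_neg_one, one_div]
    _ ≤ g.ρ ε ^ (-((c+1:ℕ):ℤ)) := g.zpow_neg_le hε hε1 (by omega)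

theorem Gauge.SMod.shift {g : Gauge} {𝕜 : Type} [RCLike 𝕜] {A : ℕ → ℝ → 𝕜}
    (hA : g.SMod A) (N₀ : ℕ) : g.SMod fun n ε => A (n + N₀) ε := by
  intro K hK
  have h1 := hA (fun ε => N₀ + K ε) ((g.nmod_const N₀).add hK)
  have h2 := hA.range (g.nmod_const N₀)
  have h := h1.sub h2
  have heq : (fun ε => (∑ n ∈ Finset.range (N₀ + K ε + 1), A n ε) -
      ∑ n ∈ Finset.range N₀, A n ε) = fun ε => ∑ n ∈ Finset.range (K ε + 1), A (n + N₀) ε := by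
    funext ε
    have e1 : (∑ n ∈ Finset.range N₀, A n ε) + (∑ n ∈ Finset.Ico N₀ (N₀ + K ε + 1), A n ε)
        = ∑ n ∈ Finset.range (N₀ + K ε + 1), A n ε :=
      Finset.sum_range_add_sum_Ico _ (by omega)
    have e2 : ∑ n ∈ Finset.Ico N₀ (N₀ + K ε + 1), A n ε
        = ∑ n ∈ Finset.range (K ε + 1), A (N₀ + n) ε := by
      rw [Finset.sum_Ico_eq_sum_range, show N₀ + K ε + 1 - N₀ = K ε + 1 by omega]
    rw [← e1, e2]
    rw [add_sub_cancel_left]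
    exact Finset.sum_congr rfl fun n _ => by rw [Nat.add_comm]
  rwa [heq] at h


/-- Auxiliary: the norm of a difference of partial sums is bounded by the difference of the
partial sums of the norms. -/
theorem sum_diff_bound {𝕜 : Type} [RCLike 𝕜] (A : ℕ → 𝕜) {K N : ℕ} (h : K ≤ N) :
    ‖(∑ n ∈ Finset.range (N+1), A n) - ∑ n ∈ Finset.range (K+1), A n‖ ≤
      (∑ n ∈ Finset.range (N+1), ‖A n‖) - ∑ n ∈ Finset.range (K+1), ‖A n‖ := by
  rw [← Finset.sum_Ico_eq_sub _ (by omega : K+1 ≤ N+1),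
      ← Finset.sum_Ico_eq_sub _ (by omega : K+1 ≤ N+1)]
  exact norm_sum_le _ _

/-- Auxiliary: transfer an `absLt` bound to canonical representatives. -/
theorem absLt_canon {g : Gauge} {𝕜 : Type} [RCLike 𝕜] {x y : ℝ → 𝕜} (hx : g.Mod x)
    (hy : g.Mod y) {q : ℕ}
    (h : GQ.absLt g (GQ.mk g x hx) (GQ.mk g y hy) (g.dpow q)) :
    EvS fun ε => ‖x ε - y ε‖ ≤ 2 * g.ρ ε ^ q := by
  obtain ⟨a, b, u, ha, hb, hu, m, hev⟩ := h
  have hax : g.Negl fun ε => a.1 ε - x ε := Quotient.exact ha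
  have hby : g.Negl fun ε => b.1 ε - y ε := Quotient.exact hb
  have huq : g.Negl fun ε => u.1 ε - g.ρ ε ^ q := Quotient.exact hu
  refine ((((hax (m+1)).and (hby (m+1))).and ((huq q).and hev)).and
    (g.evs_le (by norm_num : (0:ℝ) < 1/2))).mono fun ε hε hε1 hh => ?_
  obtain ⟨⟨⟨h1', h2'⟩, h3', h4⟩, h5⟩ := hh
  have h1 : ‖a.1 ε - x ε‖ ≤ g.ρ ε ^ (m+1) := h1'
  have h2 : ‖b.1 ε - y ε‖ ≤ g.ρ ε ^ (m+1) := h2'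
  have h3 : ‖u.1 ε - g.ρ ε ^ q‖ ≤ g.ρ ε ^ q := h3'
  have hρ := g.pos ε hε hε1
  have hu2 : u.1 ε ≤ 2 * g.ρ ε ^ q := by
    rw [Real.norm_eq_abs] at h3
    have := abs_le.mp h3
    linarith [this.2]
  have tri : ‖x ε - y ε‖ ≤ ‖a.1 ε - x ε‖ + ‖a.1 ε - b.1 ε‖ + ‖b.1 ε - y ε‖ := by
    have heq : x ε - y ε = -(a.1 ε - x ε) + (a.1 ε - b.1 ε) + (b.1 ε - y ε) := by ring
    rw [heq]
    calc ‖-(a.1 ε - x ε) + (a.1 ε - b.1 ε) + (b.1 ε - y ε)‖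
        ≤ ‖-(a.1 ε - x ε) + (a.1 ε - b.1 ε)‖ + ‖b.1 ε - y ε‖ := norm_add_le _ _
      _ ≤ ‖-(a.1 ε - x ε)‖ + ‖a.1 ε - b.1 ε‖ + ‖b.1 ε - y ε‖ := by
          have := norm_add_le (-(a.1 ε - x ε)) (a.1 ε - b.1 ε)
          linarith
      _ = ‖a.1 ε - x ε‖ + ‖a.1 ε - b.1 ε‖ + ‖b.1 ε - y ε‖ := by rw [norm_neg]
  have hpow : g.ρ ε ^ (m+1) = g.ρ ε ^ m * g.ρ ε := pow_succ _ _
  have hpm : (0:ℝ) ≤ g.ρ ε ^ m := pow_nonneg hρ.le m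
  nlinarith [tri, h1, h2, h4, hu2]

/-- Auxiliary: finite sums of hypernatural-moderate nets are moderate. -/
theorem nmod_sum (g : Gauge) (k : ℕ) (f : ℕ → ℝ → ℕ) (hf : ∀ j, g.NMod (f j)) :
    g.NMod fun ε => ∑ j ∈ Finset.range k, f j ε := by
  induction k with
  | zero => simpa using g.nmod_const 0
  | succ k ih =>
      have h := ih.add (hf k)
      have heq : (fun ε => (∑ j ∈ Finset.range k, f j ε) + f k ε)
          = fun ε => ∑ j ∈ Finset.range (k+1), f j ε := by
        funext ε; rw [Finset.sum_range_succ]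
      rwa [heq] at h

/-- absolute convergence implies convergence, and the modulus of the sum is
bounded by the sum of the moduli. -/
theorem stmt3 (g : Gauge) (A : ℕ → ℝ → ℂ) (hA : g.SMod A)
    (hAabs : g.SMod fun n ε => ‖A n ε‖)
    (t : Rt g) (hconv : HSConv g (fun n ε => ‖A n ε‖) hAabs t) :
    ∃ s : Ct g, HSConv g A hA s ∧ Rt.le g (GQ.abs g s) t := by
  classical
  obtain ⟨⟨τ, hτ⟩, hτeq⟩ := Quotient.exists_rep t
  have hconv' : ∀ q : ℕ, ∃ M : Nt g, ∀ n : Nt g, Nt.le g M n →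
      GQ.absLt g (partialSum g (fun n ε => ‖A n ε‖) hAabs n) t (g.dpow q) := hconv
  choose M hM using hconv'
  set μ : ℕ → ℝ → ℕ := fun q => ((M q).out).1 with hμdef
  have hμmod : ∀ q, g.NMod (μ q) := fun q => ((M q).out).2
  -- key transfer lemma: along any hypernatural ≥ M q, partial sums of norms are 2ρ^q-close to τ
  have key : ∀ q : ℕ, ∀ ν : ℝ → ℕ, ∀ hν : g.NMod ν, (EvS fun ε => μ q ε ≤ ν ε) →
      EvS fun ε => ‖(∑ n ∈ Finset.range (ν ε + 1), ‖A n ε‖) - τ ε‖ ≤ 2 * g.ρ ε ^ q := by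
    intro q ν hν hle
    have hle' : Nt.le g (M q) (Quotient.mk (natSetoid g) ⟨ν, hν⟩) :=
      ⟨(M q).out, ⟨ν, hν⟩, (M q).out_eq, rfl, hle⟩
    have habs := hM q _ hle'
    rw [← hτeq] at habs
    exact absLt_canon (hAabs ν hν) hτ habs
  -- the monotone diagonal sequence of hypernatural indices
  set μ' : ℕ → ℝ → ℕ := fun q ε => (Finset.range (q+1)).sup fun j => μ j ε with hμ'def
  have hμ'mod : ∀ q, g.NMod (μ' q) := by
    intro q
    refine (nmod_sum g (q+1) μ hμmod).mono fun ε => ?_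
    exact Finset.sup_le fun j hj =>
      Finset.single_le_sum (f := fun j => μ j ε) (fun _ _ => Nat.zero_le _) hj
  have hμle : ∀ q ε, μ q ε ≤ μ' q ε := fun q ε =>
    Finset.le_sup (f := fun j => μ j ε) (Finset.self_mem_range_succ q)
  have hμ'mono : ∀ {j q : ℕ}, j ≤ q → ∀ ε, μ' j ε ≤ μ' q ε := fun h ε =>
    Finset.sup_mono (Finset.range_subset_range.mpr (by omega))
  have hdq : ∀ q : ℕ, EvS fun ε =>
      ‖(∑ n ∈ Finset.range (μ' q ε + 1), ‖A n ε‖) - τ ε‖ ≤ 2 * g.ρ ε ^ q :=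
    fun q => key q (μ' q) (hμ'mod q) ⟨1, one_pos, le_refl 1, fun ε _ _ => hμle q ε⟩
  choose d hd0 hd1 hdP using hdq
  -- thresholds
  set E : ℕ → ℝ := fun q => min ((Finset.range (q+1)).inf' ⟨0, by simp⟩ d) (1/(q+1)) with hEdef
  have hE0 : ∀ q, 0 < E q := fun q =>
    lt_min ((Finset.lt_inf'_iff _).mpr fun j _ => hd0 j) (by positivity)
  have hEd : ∀ {j q : ℕ}, j ≤ q → E q ≤ d j := fun {j q} h =>
    (min_le_left _ _).trans (Finset.inf'_le _ (Finset.mem_range.mpr (by omega)))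
  have hEinv : ∀ q, E q ≤ 1/(q+1) := fun q => min_le_right _ _
  have hEmono : ∀ {j q : ℕ}, j ≤ q → E q ≤ E j := by
    intro j q h
    refine le_min (Finset.le_inf' _ _ fun b hb => hEd (by
      have := Finset.mem_range.mp hb; omega)) ((hEinv q).trans ?_)
    have h1 : (0:ℝ) < (j:ℝ) + 1 := by positivity
    have h2 : ((j:ℝ) + 1) ≤ (q:ℝ) + 1 := by exact_mod_cast by omega
    exact one_div_le_one_div_of_le h1 h2
  set qf : ℝ → ℕ := fun ε => Nat.findGreatest (fun q => ε ≤ E q) ⌈ε⁻¹⌉₊ with hqfdef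
  have hqf_ge : ∀ {ε : ℝ} {r : ℕ}, 0 < ε → ε ≤ E r → r ≤ qf ε := by
    intro ε r hε hr
    refine Nat.le_findGreatest ?_ hr
    have h2 := hr.trans (hEinv r)
    rw [le_div_iff₀ (by positivity)] at h2
    have h1 : (r:ℝ) + 1 ≤ 1/ε := (le_div_iff₀ hε).mpr (by linarith [mul_comm ε ((r:ℝ)+1)])
    have : (r:ℝ) < ε⁻¹ := by rw [inv_eq_one_div]; linarith
    exact (Nat.lt_ceil.mpr this).le
  have hqf_spec : ∀ {ε : ℝ}, 0 < ε → ε ≤ E 0 → ε ≤ E (qf ε) := fun {ε} hε h0 =>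
    Nat.findGreatest_spec (P := fun q => ε ≤ E q) (Nat.zero_le _) h0
  -- the candidate sum
  set sfun : ℝ → ℂ := fun ε =>
    if 0 < ε ∧ ε ≤ E 0 then ∑ n ∈ Finset.range (μ' (qf ε) ε + 1), A n ε else 0 with hsdef
  have hsb : ∀ ε : ℝ, 0 < ε → ε ≤ E 0 → ‖sfun ε‖ ≤ τ ε + 2 * g.ρ ε ^ (qf ε) := by
    intro ε hε h0
    have hspec := hqf_spec hε h0
    have hd' : ‖(∑ n ∈ Finset.range (μ' (qf ε) ε + 1), ‖A n ε‖) - τ ε‖ ≤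
        2 * g.ρ ε ^ (qf ε) := hdP (qf ε) ε hε (hspec.trans (hEd (le_refl _)))
    have hs : sfun ε = ∑ n ∈ Finset.range (μ' (qf ε) ε + 1), A n ε := if_pos ⟨hε, h0⟩
    rw [hs]
    rw [Real.norm_eq_abs] at hd'
    have hab := abs_le.mp hd'
    calc ‖∑ n ∈ Finset.range (μ' (qf ε) ε + 1), A n ε‖
        ≤ ∑ n ∈ Finset.range (μ' (qf ε) ε + 1), ‖A n ε‖ := norm_sum_le _ _
      _ ≤ τ ε + 2 * g.ρ ε ^ (qf ε) := by linarith [hab.2]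
  obtain ⟨Nτ, hNτ⟩ := hτ
  have hsmod : g.Mod sfun := by
    refine ⟨Nτ + 1, (hNτ.and (g.evs_le (by norm_num : (0:ℝ) < 1/3))).mono
      fun ε hε hε1 hh => ?_⟩
    obtain ⟨h1', h2⟩ := hh
    have h1 : ‖τ ε‖ ≤ g.ρ ε ^ (-(Nτ:ℤ)) := h1'
    have hρ := g.pos ε hε hε1
    have hone : (1:ℝ) ≤ g.ρ ε ^ (-(Nτ:ℤ)) := by
      have h := g.zpow_neg_le hε hε1 (Nat.zero_le Nτ)
      simpa using h
    have hYpos : (0:ℝ) < g.ρ ε ^ (-((Nτ+1:ℕ):ℤ)) := zpow_pos hρ _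
    have he : g.ρ ε ^ (-((Nτ+1:ℕ):ℤ)) * g.ρ ε = g.ρ ε ^ (-(Nτ:ℤ)) := by
      rw [← zpow_add_one₀ hρ.ne']; congr 1; push_cast; ring
    have hmul : g.ρ ε ^ (-((Nτ+1:ℕ):ℤ)) * g.ρ ε ≤ g.ρ ε ^ (-((Nτ+1:ℕ):ℤ)) * (1/3) :=
      mul_le_mul_of_nonneg_left h2 hYpos.le
    have hkey : g.ρ ε ^ (-(Nτ:ℤ)) + 2 ≤ g.ρ ε ^ (-((Nτ+1:ℕ):ℤ)) := by
      nlinarith [he, hmul, hone]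
    by_cases hc : 0 < ε ∧ ε ≤ E 0
    · have hb := hsb ε hc.1 hc.2
      have hτle : τ ε ≤ g.ρ ε ^ (-(Nτ:ℤ)) := by
        rw [Real.norm_eq_abs] at h1
        linarith [(abs_le.mp h1).2]
      have hple : g.ρ ε ^ (qf ε) ≤ 1 := pow_le_one₀ hρ.le (g.le_one ε hε hε1)
      show ‖sfun ε‖ ≤ _
      linarith
    · show ‖sfun ε‖ ≤ _
      rw [hsdef]
      simp only [if_neg hc, norm_zero]
      exact hYpos.le
  -- negligibility of the error term
  have hnegl : g.Negl fun ε => 2 * g.ρ ε ^ (qf ε) := by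
    intro r
    have base : EvS fun ε => ε ≤ E (r+1) :=
      ⟨min (E (r+1)) 1, lt_min (hE0 _) one_pos, min_le_right _ _,
        fun ε hε hm => hm.trans (min_le_left _ _)⟩
    refine (base.and (g.evs_le (by norm_num : (0:ℝ) < 1/2))).mono fun ε hε hε1 hh => ?_
    obtain ⟨h1, h2⟩ := hh
    have hρ := g.pos ε hε hε1
    have hge : r + 1 ≤ qf ε := hqf_ge hε h1
    have hp1 : g.ρ ε ^ (qf ε) ≤ g.ρ ε ^ (r+1) :=
      pow_le_pow_of_le_one hρ.le (g.le_one ε hε hε1) hge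
    have hp2 : g.ρ ε ^ (r+1) = g.ρ ε ^ r * g.ρ ε := pow_succ _ _
    have hpr : (0:ℝ) ≤ g.ρ ε ^ r := pow_nonneg hρ.le r
    show ‖2 * g.ρ ε ^ (qf ε)‖ ≤ g.ρ ε ^ r
    rw [Real.norm_eq_abs, abs_of_nonneg (by positivity)]
    nlinarith
  refine ⟨GQ.mk g sfun hsmod, ?_, ?_⟩
  · -- convergence
    intro q
    refine ⟨Nt.mk g (μ' (q+3)) (hμ'mod (q+3)), ?_⟩
    intro n hn
    obtain ⟨p, r, hp, hr, hpr⟩ := hn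
    have hpq : EvS fun ε => p.1 ε = μ' (q+3) ε := natEqEv g (Quotient.exact hp)
    have hle : EvS fun ε => μ' (q+3) ε ≤ r.1 ε :=
      (hpq.and hpr).mono fun ε _ _ hh => hh.1 ▸ hh.2
    have hkeyν := key (q+3) r.1 r.2 (hle.mono fun ε _ _ h => (hμle (q+3) ε).trans h)
    refine ⟨⟨fun ε => ∑ n ∈ Finset.range (r.1 ε + 1), A n ε, hA r.1 r.2⟩, ⟨sfun, hsmod⟩,
      ⟨fun ε => g.ρ ε ^ q, g.mod_pow q⟩, ?_, rfl, rfl, q+3, ?_⟩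
    · rw [← hr]; rfl
    · have eEQ : EvS fun ε => ε ≤ E (q+3) :=
        ⟨min (E (q+3)) 1, lt_min (hE0 _) one_pos, min_le_right _ _,
          fun ε hε hm => hm.trans (min_le_left _ _)⟩
      refine (((hle.and hkeyν).and eEQ).and (g.evs_le (by norm_num : (0:ℝ) < 1/3))).mono
        fun ε hε hε1 hh => ?_
      obtain ⟨⟨⟨c1', c2'⟩, c3⟩, c4⟩ := hh
      have c1 : μ' (q+3) ε ≤ r.1 ε := c1'
      have c2 : ‖(∑ n ∈ Finset.range (r.1 ε + 1), ‖A n ε‖) - τ ε‖ ≤ 2 * g.ρ ε ^ (q+3) := c2'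
      have hρ := g.pos ε hε hε1
      have hε0 : ε ≤ E 0 := c3.trans (hEmono (Nat.zero_le _))
      have hQf : q + 3 ≤ qf ε := hqf_ge hε c3
      have hs : sfun ε = ∑ n ∈ Finset.range (μ' (qf ε) ε + 1), A n ε := if_pos ⟨hε, hε0⟩
      have hd1 : ‖(∑ n ∈ Finset.range (μ' (q+3) ε + 1), ‖A n ε‖) - τ ε‖ ≤
          2 * g.ρ ε ^ (q+3) := hdP (q+3) ε hε (c3.trans (hEd (le_refl _)))
      have hd2 : ‖(∑ n ∈ Finset.range (μ' (qf ε) ε + 1), ‖A n ε‖) - τ ε‖ ≤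
          2 * g.ρ ε ^ (qf ε) := hdP (qf ε) ε hε ((hqf_spec hε hε0).trans (hEd (le_refl _)))
      have hpQ : g.ρ ε ^ (qf ε) ≤ g.ρ ε ^ (q+3) :=
        pow_le_pow_of_le_one hρ.le (g.le_one ε hε hε1) hQf
      have hK2 : μ' (q+3) ε ≤ μ' (qf ε) ε := hμ'mono hQf ε
      have b1 := sum_diff_bound (fun n => A n ε) c1
      have b2 := sum_diff_bound (fun n => A n ε) hK2
      rw [Real.norm_eq_abs] at c2 hd1 hd2
      have a2 := abs_le.mp c2
      have a1 := abs_le.mp hd1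
      have a3 := abs_le.mp hd2
      -- ‖S_ν − sfun‖ ≤ 8 ρ^(q+3)
      have tri : ‖(∑ n ∈ Finset.range (r.1 ε + 1), A n ε) - sfun ε‖ ≤
          ‖(∑ n ∈ Finset.range (r.1 ε + 1), A n ε)
            - ∑ n ∈ Finset.range (μ' (q+3) ε + 1), A n ε‖ +
          ‖(∑ n ∈ Finset.range (μ' (qf ε) ε + 1), A n ε)
            - ∑ n ∈ Finset.range (μ' (q+3) ε + 1), A n ε‖ := by
        rw [hs]
        have heq : (∑ n ∈ Finset.range (r.1 ε + 1), A n ε)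
            - ∑ n ∈ Finset.range (μ' (qf ε) ε + 1), A n ε
            = ((∑ n ∈ Finset.range (r.1 ε + 1), A n ε)
              - ∑ n ∈ Finset.range (μ' (q+3) ε + 1), A n ε)
            - ((∑ n ∈ Finset.range (μ' (qf ε) ε + 1), A n ε)
              - ∑ n ∈ Finset.range (μ' (q+3) ε + 1), A n ε) := by ring
        rw [heq]
        exact norm_sub_le _ _
      have hbound : ‖(∑ n ∈ Finset.range (r.1 ε + 1), A n ε) - sfun ε‖ ≤
          8 * g.ρ ε ^ (q+3) := by
        have e1 : (∑ n ∈ Finset.range (r.1 ε + 1), ‖A n ε‖)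
            - ∑ n ∈ Finset.range (μ' (q+3) ε + 1), ‖A n ε‖ ≤ 4 * g.ρ ε ^ (q+3) := by
          linarith [a2.2, a1.1]
        have e2 : (∑ n ∈ Finset.range (μ' (qf ε) ε + 1), ‖A n ε‖)
            - ∑ n ∈ Finset.range (μ' (q+3) ε + 1), ‖A n ε‖ ≤ 4 * g.ρ ε ^ (q+3) := by
          have : 2 * g.ρ ε ^ (qf ε) ≤ 2 * g.ρ ε ^ (q+3) := by linarith
          linarith [a3.2, a1.1]
        linarith [tri, b1, b2]
      have hpadd : g.ρ ε ^ (q+3) = g.ρ ε ^ q * g.ρ ε ^ 3 := pow_add _ _ _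
      have hp3 : g.ρ ε ^ 3 ≤ (1/3:ℝ)^3 := pow_le_pow_left₀ hρ.le c4 3
      have hpq' : (0:ℝ) ≤ g.ρ ε ^ q := pow_nonneg hρ.le q
      show ‖(∑ n ∈ Finset.range (r.1 ε + 1), A n ε) - sfun ε‖ + g.ρ ε ^ (q+3) ≤ g.ρ ε ^ q
      nlinarith [hbound]
  · -- the bound |s| ≤ t
    have hbmod : g.Mod fun ε => τ ε + 2 * g.ρ ε ^ (qf ε) := by
      have := Gauge.Mod.add (g := g) (𝕜 := ℝ) ⟨Nτ, hNτ⟩ hnegl.mod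
      exact this
    refine ⟨⟨fun ε => ‖sfun ε‖, hsmod.norm⟩, ⟨fun ε => τ ε + 2 * g.ρ ε ^ (qf ε), hbmod⟩,
      rfl, ?_, ?_⟩
    · refine (Quotient.sound ?_).trans hτeq
      show g.Negl _
      intro r
      refine (hnegl r).mono fun ε hε hε1 h => ?_
      show ‖(τ ε + 2 * g.ρ ε ^ (qf ε)) - τ ε‖ ≤ _
      have heq : (τ ε + 2 * g.ρ ε ^ (qf ε)) - τ ε = 2 * g.ρ ε ^ (qf ε) := by ring
      rw [heq]
      exact h
    · exact ⟨min (E 0) 1, lt_min (hE0 0) one_pos, min_le_right _ _,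
        fun ε hε hm => hsb ε hε (hm.trans (min_le_left _ _))⟩
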